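/- Let ξ_1,…,ξ_N be independent Bernoulli random variables with parameters p_j ∈ (0,1), let ξ̄ = (1/N)·Σ_{j=1}^N ξ_j and p̄ = (1/N)·Σ_{j=1}^N p_j. For any ε, δ ∈ (0,1), set A = ε·ln(1/ε) + (1−ε)·ln(1/(1−ε)) + (1/N)·ln(1/δ). If 1/(1 + exp(−A/(1−ε))) ≤ p̄ < 1, then P(ξ̄ ≤ ε) < δ. -/

import Mathlib

/-!
Chernoff's bound for the lower tail of `∑ ξ_j` with a tilt `t ≤ 0`: by independence the
moment generating function is `∏ (1 + (eᵗ - 1) p_j)`, which AM-GM bounds by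
`(1 + (eᵗ - 1) p̄)ᴺ`, and the optimal tilt `eᵗ = ε(1 - p̄)/(p̄(1 - ε))` yields
`P(ξ̄ ≤ ε) ≤ exp(-N D(ε ‖ p̄))` with `D` the Bernoulli relative entropy.
The hypothesis on `p̄` says `(1 - ε) log (1 - p̄) < -A`. Since
`D(ε ‖ p̄) = -H(ε) - ε log p̄ - (1 - ε) log (1 - p̄)` with `H` the binary entropy and
`A = H(ε) + (1/N) log (1/δ)`, this gives `D(ε ‖ p̄) > (1/N) log (1/δ)`, i.e. the bound is `< δ`;
it also forces `ε < p̄`, so the tilt is indeed `≤ 0`.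
-/

open MeasureTheory ProbabilityTheory Real Finset

theorem Real.prod_le_sum_div_card_pow {ι : Type*} (s : Finset ι) (f : ι → ℝ)
    (hf : ∀ i ∈ s, 0 ≤ f i) : ∏ i ∈ s, f i ≤ ((∑ i ∈ s, f i) / #s) ^ #s := by
  rcases s.eq_empty_or_nonempty with rfl | hs
  · simp
  have hcard : (0 : ℝ) < #s := by exact_mod_cast hs.card_pos
  have hamgm := Real.geom_mean_le_arith_mean s (fun _ ↦ 1) f (fun _ _ ↦ zero_le_one)
    (by simpa using hcard) hf
  simp only [rpow_one, sum_const, nsmul_eq_mul, mul_one, one_mul] at hamgm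
  calc ∏ i ∈ s, f i = ((∏ i ∈ s, f i) ^ ((#s : ℝ)⁻¹)) ^ #s := by
        rw [← rpow_natCast, ← rpow_mul (prod_nonneg hf), inv_mul_cancel₀ hcard.ne', rpow_one]
    _ ≤ ((∑ i ∈ s, f i) / #s) ^ #s := pow_le_pow_left₀ (rpow_nonneg (prod_nonneg hf) _) hamgm _

theorem Real.log_one_sub_lt_neg_of_sigmoid_le {x q : ℝ} (hxq : sigmoid x ≤ q) (hq1 : q < 1) :
    log (1 - q) < -x := by
  rw [log_lt_iff_lt_exp (by linarith)]
  calc 1 - q ≤ 1 - sigmoid x := by linarith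
    _ = sigmoid x * exp (-x) := by rw [sigmoid_mul_rexp_neg, sigmoid_neg]
    _ < exp (-x) := mul_lt_of_lt_one_left (exp_pos _) (sigmoid_lt_one x)

namespace ProbabilityTheory

/-- The relative entropy `D(Ber a ‖ Ber b)` of two Bernoulli distributions. -/
noncomputable def bernoulliKL (a b : ℝ) : ℝ :=
  a * log (a / b) + (1 - a) * log ((1 - a) / (1 - b))

theorem bernoulliKL_eq {a b : ℝ} (ha0 : a ≠ 0) (ha1 : a ≠ 1) (hb0 : b ≠ 0) (hb1 : b ≠ 1) :
    bernoulliKL a b = -binEntropy a - a * log b - (1 - a) * log (1 - b) := by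
  rw [bernoulliKL, binEntropy, log_div ha0 hb0, log_div (sub_ne_zero.2 ha1.symm)
    (sub_ne_zero.2 hb1.symm), log_inv, log_inv]
  ring

theorem lt_of_mul_log_one_sub_lt_neg_binEntropy {ε q : ℝ} (hε0 : 0 < ε) (hε1 : ε < 1)
    (h : (1 - ε) * log (1 - q) < -binEntropy ε) : ε < q := by
  by_contra! hqε
  have hlog : log (1 - ε) ≤ log (1 - q) := log_le_log (by linarith) (by linarith)
  have hεlogε : ε * log ε < 0 := mul_neg_of_pos_of_neg hε0 (log_neg hε0 hε1)
  rw [binEntropy, log_inv, log_inv] at h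
  nlinarith

theorem lt_bernoulliKL_of_mul_log_one_sub_lt {ε q c : ℝ} (hε0 : 0 < ε) (hε1 : ε < 1) (hq0 : 0 < q)
    (hq1 : q < 1) (h : (1 - ε) * log (1 - q) < -(binEntropy ε + c)) :
    c < bernoulliKL ε q := by
  have hεlogq : ε * log q < 0 := mul_neg_of_pos_of_neg hε0 (log_neg hq0 hq1)
  rw [bernoulliKL_eq hε0.ne' hε1.ne hq0.ne' hq1.ne]
  linarith

variable {Ω ι : Type*} [MeasurableSpace Ω] {μ : Measure Ω} [IsProbabilityMeasure μ] [Fintype ι]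

theorem mgf_of_forall_eq_zero_or_eq_one {X : Ω → ℝ} (hX : Measurable X)
    (hX01 : ∀ ω, X ω = 0 ∨ X ω = 1) (t : ℝ) :
    mgf X μ t = 1 + (exp t - 1) * μ.real {ω | X ω = 1} := by
  have hS : MeasurableSet {ω | X ω = 1} := hX (measurableSet_singleton 1)
  have hexp : (fun ω ↦ exp (t * X ω))
      = fun ω ↦ 1 + (exp t - 1) * {ω | X ω = 1}.indicator 1 ω := by
    funext ω
    rcases hX01 ω with h | h <;> simp [h]
  rw [mgf, hexp,
    integral_add (integrable_const 1) (((integrable_const 1).indicator hS).const_mul _),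
    integral_const_mul, integral_indicator_one hS]
  simp

theorem mgf_sum_le_pow_of_forall_eq_zero_or_eq_one {X : ι → Ω → ℝ} (hX : ∀ i, Measurable (X i))
    (hX01 : ∀ i ω, X i ω = 0 ∨ X i ω = 1) (hindep : iIndepFun X μ) (t : ℝ) :
    mgf (∑ i, X i) μ t
      ≤ (1 + (exp t - 1) * ((Fintype.card ι : ℝ)⁻¹ * ∑ i, μ.real {ω | X i ω = 1}))
          ^ Fintype.card ι := by
  rcases isEmpty_or_nonempty ι with hι | hι
  · simp
  have hcard : (Fintype.card ι : ℝ) ≠ 0 := by positivity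
  have hnonneg : ∀ i ∈ univ, 0 ≤ 1 + (exp t - 1) * μ.real {ω | X i ω = 1} := fun i _ ↦ by
    nlinarith [exp_pos t, measureReal_nonneg (μ := μ) (s := {ω | X i ω = 1}),
      measureReal_le_one (μ := μ) (s := {ω | X i ω = 1})]
  calc mgf (∑ i, X i) μ t = ∏ i, (1 + (exp t - 1) * μ.real {ω | X i ω = 1}) := by
        rw [hindep.mgf_sum hX]
        exact prod_congr rfl fun i _ ↦ mgf_of_forall_eq_zero_or_eq_one (hX i) (hX01 i) t
    _ ≤ ((∑ i, (1 + (exp t - 1) * μ.real {ω | X i ω = 1})) / #univ) ^ #(univ : Finset ι) :=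
        Real.prod_le_sum_div_card_pow _ _ hnonneg
    _ = _ := by
        rw [card_univ, sum_add_distrib, ← mul_sum]
        field_simp
        simp

theorem measureReal_sum_le_le_exp_neg_mul_bernoulliKL {X : ι → Ω → ℝ}
    (hX : ∀ i, Measurable (X i)) (hX01 : ∀ i ω, X i ω = 0 ∨ X i ω = 1) (hindep : iIndepFun X μ)
    {ε q : ℝ} (hq : (Fintype.card ι : ℝ)⁻¹ * ∑ i, μ.real {ω | X i ω = 1} = q)
    (hε0 : 0 < ε) (hεq : ε < q) (hq1 : q < 1) :
    μ.real {ω | ∑ i, X i ω ≤ ε * Fintype.card ι}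
      ≤ exp (-(Fintype.card ι * bernoulliKL ε q)) := by
  set n := Fintype.card ι
  have hq0 : 0 < q := hε0.trans hεq
  have hε1 : 0 < 1 - ε := by linarith
  have hq1' : 0 < 1 - q := by linarith
  -- the optimal tilt `exp t = r` of the Chernoff bound
  set r := ε * (1 - q) / (q * (1 - ε))
  have hr0 : 0 < r := by positivity
  have hr1 : r ≤ 1 := by
    rw [div_le_one (by positivity)]
    nlinarith
  have hmean : 1 + (r - 1) * q = (1 - q) / (1 - ε) := by
    simp only [r]
    field_simp
    ring
  have hexponent : log r * ε - log ((1 - q) / (1 - ε)) = bernoulliKL ε q := by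
    rw [bernoulliKL_eq hε0.ne' (by linarith) hq0.ne' hq1.ne,
      log_div (by positivity) (by positivity), log_mul hε0.ne' hq1'.ne', log_mul hq0.ne' hε1.ne',
      log_div hq1'.ne' hε1.ne', binEntropy, log_inv, log_inv]
    ring
  have hint : Integrable (fun ω ↦ exp (log r * (∑ i, X i) ω)) μ := by
    refine Integrable.of_bound (by fun_prop) 1 (Filter.Eventually.of_forall fun ω ↦ ?_)
    have hsum : 0 ≤ (∑ i, X i) ω := by
      rw [Finset.sum_apply]
      exact sum_nonneg fun i _ ↦ by rcases hX01 i ω with h | h <;> simp [h]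
    rw [norm_of_nonneg (exp_pos _).le, exp_le_one_iff]
    exact mul_nonpos_of_nonpos_of_nonneg (log_nonpos hr0.le hr1) hsum
  have hmgf := mgf_sum_le_pow_of_forall_eq_zero_or_eq_one hX hX01 hindep (log r)
  rw [exp_log hr0, hq, hmean] at hmgf
  calc μ.real {ω | ∑ i, X i ω ≤ ε * n}
      ≤ exp (-log r * (ε * n)) * mgf (∑ i, X i) μ (log r) := by
        simpa only [Finset.sum_apply] using
          measure_le_le_exp_mul_mgf (ε * n) (log_nonpos hr0.le hr1) hint
    _ ≤ exp (-log r * (ε * n)) * ((1 - q) / (1 - ε)) ^ n := by gcongr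
    _ = exp (-(n * bernoulliKL ε q)) := by
        rw [← hexponent, ← exp_log (by positivity : 0 < (1 - q) / (1 - ε)), ← exp_nat_mul,
          ← exp_add, exp_log (by positivity)]
        ring_nf

end ProbabilityTheory

theorem bernoulli_average_lower_tail
    {Ω : Type*} [MeasurableSpace Ω] (μ : Measure Ω) [IsProbabilityMeasure μ]
    {N : ℕ} (hN : 0 < N)
    (ξ : Fin N → Ω → ℝ) (hξm : ∀ j, Measurable (ξ j))
    (hξval : ∀ j ω, ξ j ω = 0 ∨ ξ j ω = 1)
    (hindep : iIndepFun ξ μ)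
    (p : Fin N → ℝ)
    (hpe : ∀ j, (μ {ω | ξ j ω = 1}).toReal = p j)
    (ε δ : ℝ) (hε0 : 0 < ε) (hε1 : ε < 1) (hδ0 : 0 < δ) (hδ1 : δ < 1)
    (hpbar : 1 / (1 + Real.exp (-(ε * Real.log (1 / ε) + (1 - ε) * Real.log (1 / (1 - ε))
          + (N : ℝ)⁻¹ * Real.log (1 / δ)) / (1 - ε)))
      ≤ (N : ℝ)⁻¹ * ∑ j, p j)
    (hpbar1 : (N : ℝ)⁻¹ * ∑ j, p j < 1) :
    (μ {ω | (N : ℝ)⁻¹ * ∑ j, ξ j ω ≤ ε}).toReal < δ := by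
  set q := (N : ℝ)⁻¹ * ∑ j, p j
  set c := (N : ℝ)⁻¹ * log (1 / δ)
  have hNpos : (0 : ℝ) < N := by exact_mod_cast hN
  have hc : 0 ≤ c :=
    mul_nonneg (inv_nonneg.2 hNpos.le) (log_nonneg (by rw [le_div_iff₀ hδ0]; linarith))
  have hsigmoid : sigmoid ((binEntropy ε + c) / (1 - ε)) ≤ q := by
    simpa only [sigmoid_def, binEntropy, one_div, neg_div] using hpbar
  have hlog : (1 - ε) * log (1 - q) < -(binEntropy ε + c) := by
    have := log_one_sub_lt_neg_of_sigmoid_le hsigmoid hpbar1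
    rwa [← lt_div_iff₀' (by linarith), neg_div]
  have hεq : ε < q := lt_of_mul_log_one_sub_lt_neg_binEntropy hε0 hε1 (by linarith)
  have hKL : c < bernoulliKL ε q :=
    lt_bernoulliKL_of_mul_log_one_sub_lt hε0 hε1 (by linarith) hpbar1 hlog
  have hset :
      {ω | (N : ℝ)⁻¹ * ∑ j, ξ j ω ≤ ε} = {ω | ∑ j, ξ j ω ≤ ε * Fintype.card (Fin N)} := by
    ext ω
    simp only [Set.mem_ofPred_eq, Fintype.card_fin, inv_mul_le_iff₀ hNpos, mul_comm]
  calc μ.real {ω | (N : ℝ)⁻¹ * ∑ j, ξ j ω ≤ ε}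
      ≤ exp (-(Fintype.card (Fin N) * bernoulliKL ε q)) := by
        rw [hset]
        exact measureReal_sum_le_le_exp_neg_mul_bernoulliKL hξm hξval hindep
          (by simp only [Fintype.card_fin, measureReal_def, hpe, q]) hε0 hεq hpbar1
    _ < exp (-(N * c)) := by simp only [Fintype.card_fin]; gcongr
    _ = δ := by rw [mul_inv_cancel_left₀ hNpos.ne', one_div, log_inv, neg_neg, exp_log hδ0]
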